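/- Let m and d be positive integers with d > 1 and 1 ≤ m ≤ d, and set β = (log m)/(log d). Then the β-dimensional Hausdorff measure of A_{m,d} is at least 1/(2m); equivalently, for every countable cover (U_r) of A_{m,d} by sets, one has ∑_r |U_r|^β ≥ 1/(2m), where |U| denotes the diameter of U. -/

import Mathlib

/-!
Push the uniform Bernoulli measure on digit sequences `ℕ → Fin m` forward along the base-`d`
expansion: this is a mass distribution of total mass `1` on `A_{m,d}`. A set of diameter less
than `d⁻ⁿ` only meets expansions whose first `n` digits, read as a base-`d` numeral, take one of
two consecutive values, so its mass is at most `2 m⁻ⁿ`. Choosing `n` with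
`d⁻⁽ⁿ⁺¹⁾ ≤ |U| < d⁻ⁿ` and using `d ^ β = m` turns this into `mass U ≤ 2m |U| ^ β`, and the mass
distribution principle bounds every cover sum, hence also `μH[β] A_{m,d}`, below by `1/(2m)`.
-/

open MeasureTheory

noncomputable section

/-- `A_{m,d}` as a subset of `ℝ`: real numbers in `[0,1]` admitting a base-`d`
expansion `x = ∑_{i≥1} b_i d^{-i}` all of whose digits `b_i` lie in `{0, 1, …, m-1}`. -/
def lowDigitSet (m d : ℕ) : Set ℝ :=
  {x | ∃ b : ℕ → ℕ, (∀ i, b i < m) ∧ x = ∑' i : ℕ, (b i : ℝ) / (d : ℝ) ^ (i + 1)}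

open Filter Metric Topology
open scoped ENNReal

/-- `a 0 a 1 … a (n - 1)` read as a base-`b` numeral. -/
def prefixValue {b : ℕ} (a : ℕ → Fin b) : ℕ → ℕ
  | 0 => 0
  | n + 1 => b * prefixValue a n + a n

section prefixValue

variable {b : ℕ} (a : ℕ → Fin b)

lemma pow_mul_sum_ofDigitsTerm (n : ℕ) :
    (b : ℝ) ^ n * ∑ i ∈ Finset.range n, Real.ofDigitsTerm a i = prefixValue a n := by
  have hb : (b : ℝ) ≠ 0 := by exact_mod_cast (Fin.pos (a 0)).ne'
  induction n with
  | zero => simp [prefixValue]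
  | succ n ih =>
    rw [Finset.sum_range_succ, mul_add, pow_succ', mul_assoc, ih, Real.ofDigitsTerm, prefixValue]
    field_simp
    push_cast
    ring

lemma pow_mul_ofDigits (n : ℕ) :
    (b : ℝ) ^ n * Real.ofDigits a = prefixValue a n + Real.ofDigits (fun i => a (i + n)) := by
  have hb : (b : ℝ) ≠ 0 := by exact_mod_cast (Fin.pos (a 0)).ne'
  rw [Real.ofDigits_eq_sum_add_ofDigits a n, mul_add, pow_mul_sum_ofDigitsTerm, ← mul_assoc,
    mul_inv_cancel₀ (pow_ne_zero n hb), one_mul]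

lemma eq_of_prefixValue_eq {a' : ℕ → Fin b} {n : ℕ} (h : prefixValue a n = prefixValue a' n) :
    ∀ i < n, a i = a' i := by
  induction n with
  | zero => simp
  | succ n ih =>
    simp only [prefixValue] at h
    have hlast : (a n : ℕ) = a' n := by
      simpa [Nat.add_mul_mod_self_left, Nat.mod_eq_of_lt] using congrArg (· % b) h
    have hinit : prefixValue a n = prefixValue a' n := by
      rw [hlast] at h
      exact Nat.eq_of_mul_eq_mul_left (Fin.pos (a 0)) (Nat.add_right_cancel h)
    intro i hi
    rcases Nat.lt_succ_iff_lt_or_eq.mp hi with hi | rfl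
    · exact ih hinit i hi
    · exact Fin.ext hlast

variable {a}

/-- Two values, not one, because of double expansions such as `0.0999… = 0.1`. -/
lemma exists_prefixValue_eq_or_eq_succ {s : Set ℝ} {n : ℕ}
    (hs : ∀ x ∈ s, ∀ y ∈ s, |x - y| < ((b : ℝ) ^ n)⁻¹) :
    ∃ k, ∀ a : ℕ → Fin b, Real.ofDigits a ∈ s →
      prefixValue a n = k ∨ prefixValue a n = k + 1 := by
  classical
  by_cases hne : ∃ k, ∃ a : ℕ → Fin b, Real.ofDigits a ∈ s ∧ prefixValue a n = k
  swap
  · push Not at hne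
    exact ⟨0, fun a ha => absurd rfl (hne _ a ha)⟩
  obtain ⟨a₀, ha₀, hk⟩ := Nat.find_spec hne
  refine ⟨Nat.find hne, fun a ha => ?_⟩
  have hge : Nat.find hne ≤ prefixValue a n := Nat.find_min' hne ⟨a, ha, rfl⟩
  have hbn : (0 : ℝ) < (b : ℝ) ^ n := pow_pos (by exact_mod_cast Fin.pos (a 0)) n
  have hclose : (b : ℝ) ^ n * Real.ofDigits a < (b : ℝ) ^ n * Real.ofDigits a₀ + 1 := by
    have := mul_lt_mul_of_pos_left (abs_lt.mp (hs _ ha _ ha₀)).2 hbn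
    rw [mul_inv_cancel₀ hbn.ne', mul_sub] at this
    linarith
  have hlt : (prefixValue a n : ℝ) < prefixValue a₀ n + 2 := by
    rw [pow_mul_ofDigits, pow_mul_ofDigits] at hclose
    linarith [Real.ofDigits_nonneg (fun i => a (i + n)),
      Real.ofDigits_le_one (fun i => a₀ (i + n))]
  rw [hk] at hlt
  have : prefixValue a n < Nat.find hne + 2 := by exact_mod_cast hlt
  omega

end prefixValue

def uniformDigitMeasure (m : ℕ) [NeZero m] : Measure (ℕ → Fin m) :=
  Measure.infinitePi fun _ => (PMF.uniformOfFintype (Fin m)).toMeasure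

instance (m : ℕ) [NeZero m] : IsProbabilityMeasure (uniformDigitMeasure m) := by
  unfold uniformDigitMeasure; infer_instance

lemma uniformDigitMeasure_cylinder (m : ℕ) [NeZero m] (c : ℕ → Fin m) (n : ℕ) :
    uniformDigitMeasure m {b | ∀ i < n, b i = c i} = ((m : ℝ≥0∞) ^ n)⁻¹ := by
  have hcyl : {b : ℕ → Fin m | ∀ i < n, b i = c i} =
      (↑(Finset.range n) : Set ℕ).pi fun i => {c i} := by
    ext b; simp
  rw [hcyl, uniformDigitMeasure, Measure.infinitePi_pi _ fun _ _ => measurableSet_singleton _]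
  simp [PMF.uniformOfFintype_apply, ENNReal.inv_pow]

lemma ENNReal.exists_inv_pow_le_lt_inv_pow {d : ℕ} (hd : 1 < d) {t : ℝ≥0∞} (ht0 : t ≠ 0)
    (ht1 : t < 1) : ∃ n, ((d : ℝ≥0∞) ^ (n + 1))⁻¹ ≤ t ∧ t < ((d : ℝ≥0∞) ^ n)⁻¹ := by
  classical
  have hex : ∃ n, ((d : ℝ≥0∞) ^ (n + 1))⁻¹ ≤ t := by
    obtain ⟨N, hN⟩ := ENNReal.exists_inv_nat_lt ht0
    refine ⟨N, le_trans (ENNReal.inv_le_inv.mpr ?_) hN.le⟩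
    exact_mod_cast (Nat.lt_pow_self hd).le.trans (Nat.pow_le_pow_right (by omega) N.le_succ)
  refine ⟨Nat.find hex, Nat.find_spec hex, ?_⟩
  obtain h | ⟨k, hk⟩ : Nat.find hex = 0 ∨ ∃ k, Nat.find hex = k + 1 := by
    cases Nat.find hex <;> simp
  · simpa [h] using ht1
  · rw [hk]
    exact not_le.mp (Nat.find_min hex (hk ▸ k.lt_succ_self))

lemma ENNReal.inv_pow_rpow_log_div_log {m d : ℕ} (hd : 1 < d) (hm : 0 < m) (n : ℕ) :
    (((d : ℝ≥0∞) ^ n)⁻¹) ^ (Real.log m / Real.log d) = ((m : ℝ≥0∞) ^ n)⁻¹ := by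
  have hdβ : (d : ℝ≥0∞) ^ (Real.log m / Real.log d) = m := by
    rw [← ENNReal.ofReal_natCast, ENNReal.ofReal_rpow_of_pos (by positivity), ← Real.logb,
      Real.rpow_logb (by positivity) (by exact_mod_cast hd.ne') (by positivity)]
    simp
  rw [ENNReal.inv_rpow, ← ENNReal.rpow_natCast_mul, mul_comm, ENNReal.rpow_mul_natCast, hdβ]

namespace MeasureTheory.OuterMeasure

variable {X ι : Type*} [EMetricSpace X] [Countable ι] (μ : OuterMeasure X) {C : ℝ≥0∞} {β : ℝ}

lemma le_mul_tsum_ediam_rpow (h : ∀ s, μ s ≤ C * ediam s ^ β) {A : Set X} {U : ι → Set X}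
    (hU : A ⊆ ⋃ r, U r) : μ A ≤ C * ∑' r, ediam (U r) ^ β :=
  calc μ A ≤ ∑' r, μ (U r) := (measure_mono hU).trans (measure_iUnion_le U)
    _ ≤ ∑' r, C * ediam (U r) ^ β := ENNReal.tsum_le_tsum fun r => h (U r)
    _ = C * ∑' r, ediam (U r) ^ β := ENNReal.tsum_mul_left

lemma le_mul_hausdorffMeasure [MeasurableSpace X] [BorelSpace X] (hC : C ≠ ⊤) (hC0 : C ≠ 0)
    (h : ∀ s, μ s ≤ C * ediam s ^ β) (A : Set X) : μ A ≤ C * μH[β] A := by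
  have hle : μ ≤ mkMetric (C • fun r : ℝ≥0∞ => r ^ β) :=
    le_mkMetric _ μ 1 one_pos fun s _ => h s
  rw [mkMetric_smul _ hC hC0, ← Measure.mkMetric_toOuterMeasure] at hle
  exact hle A

end MeasureTheory.OuterMeasure

section lowDigits

variable {m d : ℕ}

def ofLowDigits (hmd : m ≤ d) (b : ℕ → Fin m) : ℝ :=
  Real.ofDigits fun i => Fin.castLE hmd (b i)

lemma ofLowDigits_mem_lowDigitSet (hmd : m ≤ d) (b : ℕ → Fin m) :
    ofLowDigits hmd b ∈ lowDigitSet m d :=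
  ⟨fun i => b i, fun i => (b i).isLt, by
    simp [ofLowDigits, Real.ofDigits, Real.ofDigitsTerm, div_eq_mul_inv]⟩

lemma uniformDigitMeasure_prefixValue_eq_le [NeZero m] (hmd : m ≤ d) (n k : ℕ) :
    uniformDigitMeasure m {b | prefixValue (fun i => Fin.castLE hmd (b i)) n = k} ≤
      ((m : ℝ≥0∞) ^ n)⁻¹ := by
  rcases Set.eq_empty_or_nonempty
    {b : ℕ → Fin m | prefixValue (fun i => Fin.castLE hmd (b i)) n = k} with h | ⟨c, hc⟩
  · simp [h]
  rw [← uniformDigitMeasure_cylinder m c n]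
  refine measure_mono fun b hb i hi => Fin.castLE_injective hmd ?_
  exact eq_of_prefixValue_eq _ ((Set.mem_ofPred.mp hb).trans hc.symm) i hi

def lowDigitMass [NeZero m] (hmd : m ≤ d) : OuterMeasure ℝ :=
  OuterMeasure.map (ofLowDigits hmd) (uniformDigitMeasure m).toOuterMeasure

lemma lowDigitMass_apply [NeZero m] (hmd : m ≤ d) (s : Set ℝ) :
    lowDigitMass hmd s = uniformDigitMeasure m (ofLowDigits hmd ⁻¹' s) := by
  simp [lowDigitMass]

lemma lowDigitMass_lowDigitSet [NeZero m] (hmd : m ≤ d) :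
    lowDigitMass hmd (lowDigitSet m d) = 1 := by
  rw [lowDigitMass_apply, Set.preimage_eq_univ_iff.mpr, measure_univ]
  rintro _ ⟨b, rfl⟩
  exact ofLowDigits_mem_lowDigitSet hmd b

lemma lowDigitMass_le_one [NeZero m] (hmd : m ≤ d) (s : Set ℝ) : lowDigitMass hmd s ≤ 1 := by
  rw [lowDigitMass_apply]; exact prob_le_one

lemma lowDigitMass_le_of_ediam_lt [NeZero m] (hmd : m ≤ d) {s : Set ℝ} {n : ℕ}
    (hs : ediam s < ((d : ℝ≥0∞) ^ n)⁻¹) : lowDigitMass hmd s ≤ 2 * ((m : ℝ≥0∞) ^ n)⁻¹ := by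
  have hdn : ((d : ℝ≥0∞) ^ n)⁻¹ = ENNReal.ofReal ((d : ℝ) ^ n)⁻¹ := by
    have : 0 < d := (NeZero.pos m).trans_le hmd
    rw [ENNReal.ofReal_inv_of_pos (by positivity)]
    simp
  have hclose : ∀ x ∈ s, ∀ y ∈ s, |x - y| < ((d : ℝ) ^ n)⁻¹ := fun x hx y hy => by
    have := (edist_le_ediam_of_mem hx hy).trans_lt (hdn ▸ hs)
    rw [edist_dist, ENNReal.ofReal_lt_ofReal_iff'] at this
    exact this.1
  obtain ⟨k, hk⟩ := exists_prefixValue_eq_or_eq_succ hclose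
  have hcover : ofLowDigits hmd ⁻¹' s ⊆
      {b | prefixValue (fun i => Fin.castLE hmd (b i)) n = k} ∪
        {b | prefixValue (fun i => Fin.castLE hmd (b i)) n = k + 1} := fun b hb => hk _ hb
  rw [lowDigitMass_apply, two_mul]
  exact (measure_mono hcover).trans ((measure_union_le _ _).trans
    (add_le_add (uniformDigitMeasure_prefixValue_eq_le hmd n k)
      (uniformDigitMeasure_prefixValue_eq_le hmd n (k + 1))))

lemma lowDigitMass_le_mul_ediam_rpow [NeZero m] (hd : 1 < d) (hmd : m ≤ d) (s : Set ℝ) :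
    lowDigitMass hmd s ≤ 2 * m * ediam s ^ (Real.log m / Real.log d) := by
  set β := Real.log m / Real.log d
  have hβ : 0 ≤ β := div_nonneg (Real.log_natCast_nonneg m) (Real.log_natCast_nonneg d)
  have hlevel : ∀ n, ediam s < ((d : ℝ≥0∞) ^ n)⁻¹ →
      lowDigitMass hmd s ≤ 2 * m * (((d : ℝ≥0∞) ^ (n + 1))⁻¹) ^ β := fun n hn =>
    calc lowDigitMass hmd s ≤ 2 * ((m : ℝ≥0∞) ^ n)⁻¹ := lowDigitMass_le_of_ediam_lt hmd hn
      _ = 2 * m * ((m : ℝ≥0∞) ^ (n + 1))⁻¹ := by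
        rw [pow_succ, ENNReal.mul_inv (by simp) (by simp), mul_comm _ (m : ℝ≥0∞)⁻¹, ← mul_assoc,
          mul_assoc 2, ENNReal.mul_inv_cancel (by simp [NeZero.ne m]) (by simp), mul_one]
      _ = _ := by rw [ENNReal.inv_pow_rpow_log_div_log hd (NeZero.pos m)]
  rcases lt_or_ge (ediam s) 1 with hs1 | hs1
  · rcases eq_or_ne (ediam s) 0 with hs0 | hs0
    · have hlim : Tendsto (fun n => 2 * (m : ℝ≥0∞) * (((d : ℝ≥0∞) ^ (n + 1))⁻¹) ^ β) atTop
          (𝓝 (2 * m * 0 ^ β)) := by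
        refine ENNReal.Tendsto.const_mul ?_ (Or.inr (ENNReal.mul_ne_top (by simp) (by simp)))
        refine (ENNReal.continuous_rpow_const.tendsto 0).comp ?_
        simp_rw [ENNReal.inv_pow]
        exact (ENNReal.tendsto_pow_atTop_nhds_zero_of_lt_one
          (ENNReal.inv_lt_one.mpr (by exact_mod_cast hd))).comp (tendsto_add_atTop_nat 1)
      rw [hs0]
      exact ge_of_tendsto' hlim fun n => hlevel n (hs0 ▸ by simp)
    · obtain ⟨n, hle, hlt⟩ := ENNReal.exists_inv_pow_le_lt_inv_pow hd hs0 hs1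
      exact (hlevel n hlt).trans (by gcongr)
  · calc lowDigitMass hmd s ≤ 1 := lowDigitMass_le_one hmd s
      _ ≤ 2 * m * 1 := by
        rw [mul_one]
        exact_mod_cast (show 1 ≤ 2 * m by have := NeZero.pos m; omega)
      _ ≤ 2 * m * ediam s ^ β := by gcongr; simpa using ENNReal.rpow_le_rpow hs1 hβ

/-- Lower-bound estimate in Lemma 4: with `β = log m / log d`, the `β`-dimensional
Hausdorff measure of `A_{m,d}` is at least `1/(2m)`; equivalently, every countable
cover `(U_r)` of `A_{m,d}` satisfies `∑_r |U_r|^β ≥ 1/(2m)`. -/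
theorem hausdorffMeasure_lowDigitSet_ge (m d : ℕ) (hd : 1 < d) (hm : 1 ≤ m) (hmd : m ≤ d) :
    ENNReal.ofReal (1 / (2 * m)) ≤ μH[Real.log m / Real.log d] (lowDigitSet m d) ∧
    ∀ U : ℕ → Set ℝ, lowDigitSet m d ⊆ ⋃ r, U r →
      ENNReal.ofReal (1 / (2 * m)) ≤
        ∑' r : ℕ, EMetric.diam (U r) ^ (Real.log m / Real.log d) := by
  have : NeZero m := ⟨by omega⟩
  have hC : (2 * m : ℝ≥0∞) ≠ ⊤ := ENNReal.mul_ne_top (by simp) (by simp)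
  have hC0 : (2 * m : ℝ≥0∞) ≠ 0 := by simp [NeZero.ne m]
  have hbound : ∀ x, ENNReal.ofReal (1 / (2 * m)) ≤ x ↔ 1 ≤ 2 * m * x := fun x => by
    have h2m : ENNReal.ofReal (2 * m) = 2 * m := by simp [ENNReal.ofReal_mul]
    rw [one_div, ENNReal.ofReal_inv_of_pos (by positivity), h2m,
      ENNReal.inv_le_iff_le_mul (fun _ => hC0) (fun h => absurd h hC)]
  have hmass := lowDigitMass_le_mul_ediam_rpow hd hmd
  refine ⟨(hbound _).2 ?_, fun U hU => (hbound _).2 ?_⟩ <;> rw [← lowDigitMass_lowDigitSet hmd]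
  · exact (lowDigitMass hmd).le_mul_hausdorffMeasure hC hC0 hmass _
  · exact (lowDigitMass hmd).le_mul_tsum_ediam_rpow hmass hU
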